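/- For ε₁, ε₂ ≥ 0 and c > 0, the compact set K = {(y,z) : y ≥ 0, z ≥ 0, y + z ≤ c} is forward invariant under the rescaled planar Robertson system: every solution starting in K remains in K for all t ≥ 0. -/

import Mathlib

/-!
Since `z' = y² ≥ 0`, `z` is nondecreasing and stays nonnegative. In the variables `y` and
`w = c - y - z` the system becomes linear, `y' = -(y + ε₂ z) y + ε₁ w`, `w' = ε₂ z y - ε₁ w`,
with nonnegative off-diagonal coefficients. For such a cooperative system the penalty
`g = (y⁻)² + (w⁻)²` is differentiable and, on a compact time interval where the coefficients are
bounded, satisfies `g' ≤ K g`; as `g(0) = 0`, Grönwall's inequality forces `g = 0`.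
-/

open Set Topology

theorem hasDerivAt_negPart_sq (x : ℝ) : HasDerivAt (fun u : ℝ => u⁻ ^ 2) (-2 * x⁻) x := by
  rcases lt_trichotomy x 0 with hx | rfl | hx
  · have h : (fun u : ℝ => u ^ 2) =ᶠ[𝓝 x] fun u => u⁻ ^ 2 := by
      filter_upwards [eventually_lt_nhds hx] with u hu
      rw [negPart_eq_neg.2 hu.le, neg_sq]
    rw [negPart_eq_neg.2 hx.le]
    simpa using (hasDerivAt_pow 2 x).congr_of_eventuallyEq h.symm
  · have h : (fun u : ℝ => u⁻ ^ 2) =O[𝓝 0] fun u => u ^ 2 :=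
      Asymptotics.IsBigO.of_bound 1 <| .of_forall fun u => by
        rcases le_total u 0 with hu | hu
        · simp [negPart_eq_neg.2 hu]
        · simp [negPart_eq_zero.2 hu, sq_nonneg]
    rw [hasDerivAt_iff_isLittleO_nhds_zero]
    simpa using h.trans_isLittleO (Asymptotics.isLittleO_pow_id one_lt_two)
  · have h : (fun _ : ℝ => (0 : ℝ)) =ᶠ[𝓝 x] fun u => u⁻ ^ 2 := by
      filter_upwards [eventually_gt_nhds hx] with u hu
      rw [negPart_eq_zero.2 hu.le, zero_pow two_ne_zero]
    rw [negPart_eq_zero.2 hx.le, mul_zero]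
    exact (hasDerivAt_const x 0).congr_of_eventuallyEq h.symm

theorem nonpos_of_deriv_right_le_mul_self {f f' : ℝ → ℝ} {K a b : ℝ}
    (hf : ContinuousOn f (Icc a b)) (hf' : ∀ x ∈ Ico a b, HasDerivWithinAt f (f' x) (Ici x) x)
    (ha : f a ≤ 0) (bound : ∀ x ∈ Ico a b, f' x ≤ K * f x) :
    ∀ x ∈ Icc a b, f x ≤ 0 := by
  intro x hx
  simpa [gronwallBound_ε0_δ0] using
    le_gronwallBound_of_liminf_deriv_right_le (K := K) (ε := 0) hf
      (fun x hx _ hr => (hf' x hx).liminf_right_slope_le hr) ha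
      (fun x hx => by simpa using bound x hx) x hx

theorem negPart_mul_linear_le {u v a b M : ℝ} (hb : 0 ≤ b) (ha : a ≤ M) (hbM : b ≤ M) :
    -2 * u⁻ * (a * u + b * v) ≤ 2 * M * u⁻ ^ 2 + M * (u⁻ ^ 2 + v⁻ ^ 2) := by
  have hu : u⁻ * u = -u⁻ ^ 2 := by
    rcases le_total u 0 with h | h
    · rw [negPart_eq_neg.2 h]; ring
    · rw [negPart_eq_zero.2 h]; ring
  have hcross : -u⁻ * v ≤ u⁻ * v⁻ := by nlinarith [neg_le_negPart v, negPart_nonneg u]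
  nlinarith [sq_nonneg (u⁻ - v⁻), mul_nonneg (sub_nonneg.2 ha) (sq_nonneg u⁻),
    mul_nonneg hb (sub_nonneg.2 hbM), mul_le_mul_of_nonneg_left hcross hb]

theorem nonneg_of_cooperative_linear_system {u v a b c d : ℝ → ℝ} {M T : ℝ}
    (hu : ∀ t ∈ Icc 0 T, HasDerivAt u (a t * u t + b t * v t) t)
    (hv : ∀ t ∈ Icc 0 T, HasDerivAt v (c t * u t + d t * v t) t)
    (hb : ∀ t ∈ Ico 0 T, 0 ≤ b t) (hc : ∀ t ∈ Ico 0 T, 0 ≤ c t)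
    (hM : ∀ t ∈ Ico 0 T, a t ≤ M ∧ b t ≤ M ∧ c t ≤ M ∧ d t ≤ M)
    (h0 : 0 ≤ u 0 ∧ 0 ≤ v 0) : ∀ t ∈ Icc 0 T, 0 ≤ u t ∧ 0 ≤ v t := by
  set g : ℝ → ℝ := fun t => (u t)⁻ ^ 2 + (v t)⁻ ^ 2 with hg
  have hg' : ∀ t ∈ Icc 0 T, HasDerivAt g
      (-2 * (u t)⁻ * (a t * u t + b t * v t) + -2 * (v t)⁻ * (c t * u t + d t * v t)) t :=
    fun t ht =>
      (((hasDerivAt_negPart_sq _).comp t (hu t ht)).add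
        ((hasDerivAt_negPart_sq _).comp t (hv t ht))).congr_deriv (by ring)
  have hg_nonpos := nonpos_of_deriv_right_le_mul_self (K := 4 * M)
    (fun t ht => (hg' t ht).continuousAt.continuousWithinAt)
    (fun t ht => (hg' t (Ico_subset_Icc_self ht)).hasDerivWithinAt)
    (by simp [hg, negPart_eq_zero.2 h0.1, negPart_eq_zero.2 h0.2])
    (fun t ht => by
      obtain ⟨haM, hbM, hcM, hdM⟩ := hM t ht
      have := negPart_mul_linear_le (u := u t) (v := v t) (hb t ht) haM hbM
      have := negPart_mul_linear_le (u := v t) (v := u t) (hc t ht) hdM hcM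
      simp only [hg]
      linarith [add_comm (c t * u t) (d t * v t)])
  intro t ht
  obtain ⟨hu0, hv0⟩ := (add_eq_zero_iff_of_nonneg (by positivity) (by positivity)).1
    ((hg_nonpos t ht).antisymm (by positivity))
  exact ⟨negPart_eq_zero.1 (pow_eq_zero_iff two_ne_zero |>.1 hu0),
    negPart_eq_zero.1 (pow_eq_zero_iff two_ne_zero |>.1 hv0)⟩

theorem rescaled_robertson_K_forward_invariant_general
    (ε₁ ε₂ c : ℝ) (hε₁ : 0 ≤ ε₁) (hε₂ : 0 ≤ ε₂)
    (y z : ℝ → ℝ)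
    (hy : ∀ t ≥ (0 : ℝ),
      HasDerivAt y (ε₁ * (c - y t - z t) - (y t) ^ 2 - ε₂ * y t * z t) t)
    (hz : ∀ t ≥ (0 : ℝ), HasDerivAt z ((y t) ^ 2) t)
    (h0 : 0 ≤ y 0 ∧ 0 ≤ z 0 ∧ y 0 + z 0 ≤ c) :
    ∀ t ≥ (0 : ℝ), 0 ≤ y t ∧ 0 ≤ z t ∧ y t + z t ≤ c := by
  intro T hT
  have hz_mono : MonotoneOn z (Ici 0) :=
    monotoneOn_of_hasDerivWithinAt_nonneg (convex_Ici 0)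
      (fun t ht => (hz t ht).continuousAt.continuousWithinAt)
      (fun t ht => (hz t (interior_subset ht)).hasDerivWithinAt) (fun t _ => sq_nonneg (y t))
  have hz_nonneg : ∀ t ∈ Icc 0 T, 0 ≤ z t := fun t ht =>
    h0.2.1.trans (hz_mono self_mem_Ici ht.1 ht.1)
  obtain ⟨M, hM⟩ := isCompact_Icc.exists_bound_of_continuousOn (f := y) (s := Icc 0 T)
    (fun t ht => (hy t ht.1).continuousAt.continuousWithinAt)
  have key := nonneg_of_cooperative_linear_system (u := y) (v := fun t => c - y t - z t)
    (a := fun t => -(y t + ε₂ * z t)) (b := fun _ => ε₁) (c := fun t => ε₂ * z t)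
    (d := fun _ => -ε₁) (M := M + ε₁ + ε₂ * z T)
    (fun t ht => (hy t ht.1).congr_deriv (by ring))
    (fun t ht => (((hasDerivAt_const t c).sub (hy t ht.1)).sub (hz t ht.1)).congr_deriv (by ring))
    (fun _ _ => hε₁) (fun t ht => mul_nonneg hε₂ (hz_nonneg t (Ico_subset_Icc_self ht)))
    (fun t ht => by
      have ht' := Ico_subset_Icc_self ht
      have hyt := abs_le.1 (Real.norm_eq_abs _ ▸ hM t ht')
      have hzt := mul_le_mul_of_nonneg_left (hz_mono ht'.1 hT ht'.2) hε₂
      have := mul_nonneg hε₂ (hz_nonneg t ht')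
      refine ⟨?_, ?_, ?_, ?_⟩ <;> linarith)
    ⟨h0.1, by linarith [h0.2.2]⟩ T ⟨hT, le_rfl⟩
  exact ⟨key.1, hz_nonneg T ⟨hT, le_rfl⟩, by linarith [key.2]⟩

/-- For ε₁, ε₂ ≥ 0 and c > 0, the compact set
K = {(y,z) : y ≥ 0, z ≥ 0, y + z ≤ c} is forward invariant under the rescaled
planar Robertson system y' = ε₁(c − y − z) − y² − ε₂yz, z' = y². -/
theorem rescaled_robertson_K_forward_invariant
    (ε₁ ε₂ c : ℝ) (hε₁ : 0 ≤ ε₁) (hε₂ : 0 ≤ ε₂) (hc : 0 < c)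
    (y z : ℝ → ℝ)
    (hy : ∀ t ≥ (0 : ℝ),
      HasDerivAt y (ε₁ * (c - y t - z t) - (y t) ^ 2 - ε₂ * y t * z t) t)
    (hz : ∀ t ≥ (0 : ℝ), HasDerivAt z ((y t) ^ 2) t)
    (h0 : 0 ≤ y 0 ∧ 0 ≤ z 0 ∧ y 0 + z 0 ≤ c) :
    ∀ t ≥ (0 : ℝ), 0 ≤ y t ∧ 0 ≤ z t ∧ y t + z t ≤ c :=
  rescaled_robertson_K_forward_invariant_general ε₁ ε₂ c hε₁ hε₂ y z hy hz h0
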